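/- For the ℓ-covered circle Y(u) = (a/ℓ)(sin ℓu, -cos ℓu) + (b/ℓ)(cos ℓu, sin ℓu) + (c,d) with ℓ a positive integer, the Dirichlet energy is Q[Y] = π(a²+b²), the signed area is A[Y] = π(a²+b²)/ℓ, and hence E[Y] = Q[Y]/A[Y] = ℓ. In particular the energy of any equilibrium is a positive integer. -/

import Mathlib

/-!
The velocity of the `ℓ`-covered circle has constant squared length `a² + b²`, and
`Y · R Y'` is the constant `-(a² + b²)/ℓ` plus a trigonometric polynomial of frequency `ℓ`,
whose integral over a full period vanishes.
-/

open Real intervalIntegral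

/-- Rotation by π/2 in the plane. -/
def rot2 (p : ℝ × ℝ) : ℝ × ℝ := (-p.2, p.1)

/-- Euclidean dot product on ℝ². -/
def dotp (p q : ℝ × ℝ) : ℝ := p.1 * q.1 + p.2 * q.2

/-- Squared Euclidean norm on ℝ². -/
def nsq (p : ℝ × ℝ) : ℝ := p.1 ^ 2 + p.2 ^ 2

theorem integral_sin_nat_mul_eq_zero {n : ℕ} (hn : n ≠ 0) :
    ∫ u in (0:ℝ)..(2 * π), sin (n * u) = 0 := by
  rw [integral_comp_mul_left (fun x => sin x) (Nat.cast_ne_zero.mpr hn), integral_sin,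
    cos_nat_mul_two_pi]
  simp

theorem integral_cos_nat_mul_eq_zero {n : ℕ} (hn : n ≠ 0) :
    ∫ u in (0:ℝ)..(2 * π), cos (n * u) = 0 := by
  rw [integral_comp_mul_left (fun x => cos x) (Nat.cast_ne_zero.mpr hn), integral_cos,
    show (n : ℝ) * (2 * π) = (2 * n : ℕ) * π by push_cast; ring, sin_nat_mul_pi]
  simp

/-- The `ℓ`-fold covered circle of centre `(c, d)` and radius `√(a² + b²) / |ℓ|`. -/
noncomputable def coveredCircle (a b c d ℓ : ℝ) (u : ℝ) : ℝ × ℝ :=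
  (a / ℓ) • (sin (ℓ * u), -cos (ℓ * u)) + (b / ℓ) • (cos (ℓ * u), sin (ℓ * u)) + (c, d)

section CoveredCircle

variable {a b c d ℓ : ℝ}

theorem hasDerivAt_coveredCircle (hℓ : ℓ ≠ 0) (u : ℝ) :
    HasDerivAt (coveredCircle a b c d ℓ)
      (a * cos (ℓ * u) - b * sin (ℓ * u), a * sin (ℓ * u) + b * cos (ℓ * u)) u := by
  have hlin : HasDerivAt (fun u => ℓ * u) ℓ u := by simpa using (hasDerivAt_id u).const_mul ℓ
  have hsin := hlin.sin
  have hcos := hlin.cos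
  have h₁ := (hsin.prodMk hcos.neg).const_smul (a / ℓ)
  have h₂ := (hcos.prodMk hsin).const_smul (b / ℓ)
  refine ((h₁.add h₂).add_const (c, d)).congr_deriv ?_
  ext <;> simp only [Prod.smul_mk, Prod.fst_add, Prod.snd_add, smul_eq_mul, sub_eq_add_neg] <;>
    field_simp

theorem deriv_coveredCircle (hℓ : ℓ ≠ 0) (u : ℝ) :
    deriv (coveredCircle a b c d ℓ) u =
      (a * cos (ℓ * u) - b * sin (ℓ * u), a * sin (ℓ * u) + b * cos (ℓ * u)) :=
  (hasDerivAt_coveredCircle hℓ u).deriv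

theorem nsq_deriv_coveredCircle (hℓ : ℓ ≠ 0) (u : ℝ) :
    nsq (deriv (coveredCircle a b c d ℓ) u) = a ^ 2 + b ^ 2 := by
  rw [deriv_coveredCircle hℓ, nsq]
  linear_combination (a ^ 2 + b ^ 2) * sin_sq_add_cos_sq (ℓ * u)

theorem dotp_coveredCircle_rot2_deriv (hℓ : ℓ ≠ 0) (u : ℝ) :
    dotp (coveredCircle a b c d ℓ u) (rot2 (deriv (coveredCircle a b c d ℓ) u)) =
      -((a ^ 2 + b ^ 2) / ℓ) - (a * c + b * d) * sin (ℓ * u) + (a * d - b * c) * cos (ℓ * u) := by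
  rw [deriv_coveredCircle hℓ, coveredCircle, dotp, rot2]
  simp only [Prod.smul_mk, Prod.fst_add, Prod.snd_add, smul_eq_mul]
  field_simp
  linear_combination (-(a ^ 2 + b ^ 2)) * sin_sq_add_cos_sq (ℓ * u)

end CoveredCircle

theorem integral_nsq_deriv_coveredCircle (a b c d : ℝ) {ℓ : ℝ} (hℓ : ℓ ≠ 0) :
    ∫ u in (0:ℝ)..(2 * π), nsq (deriv (coveredCircle a b c d ℓ) u) = 2 * π * (a ^ 2 + b ^ 2) := by
  simp only [nsq_deriv_coveredCircle hℓ, integral_const, sub_zero, smul_eq_mul]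

theorem integral_dotp_coveredCircle_rot2_deriv (a b c d : ℝ) {ℓ : ℕ} (hℓ : ℓ ≠ 0) :
    ∫ u in (0:ℝ)..(2 * π), dotp (coveredCircle a b c d ℓ u) (rot2 (deriv (coveredCircle a b c d ℓ) u))
      = -(2 * π * (a ^ 2 + b ^ 2) / ℓ) := by
  simp only [dotp_coveredCircle_rot2_deriv (Nat.cast_ne_zero.mpr hℓ)]
  have hsin : IntervalIntegrable (fun u : ℝ => (a * c + b * d) * sin (ℓ * u)) MeasureTheory.volume 0 (2 * π) :=
    (by fun_prop : Continuous _).intervalIntegrable _ _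
  have hcos : IntervalIntegrable (fun u : ℝ => (a * d - b * c) * cos (ℓ * u)) MeasureTheory.volume 0 (2 * π) :=
    (by fun_prop : Continuous _).intervalIntegrable _ _
  rw [integral_add (intervalIntegrable_const.sub hsin) hcos, integral_sub intervalIntegrable_const hsin,
    integral_const_mul, integral_const_mul, integral_sin_nat_mul_eq_zero hℓ,
    integral_cos_nat_mul_eq_zero hℓ]
  simp only [integral_const, smul_eq_mul, sub_zero, mul_zero, add_zero]
  ring

/-- for the `ℓ`-covered circle
`Y(u) = (a/ℓ)(sin ℓu, -cos ℓu) + (b/ℓ)(cos ℓu, sin ℓu) + (c,d)` with `ℓ` a positive integer,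
the Dirichlet energy is `Q[Y] = π(a²+b²)`, the signed area is `A[Y] = π(a²+b²)/ℓ`, and hence
(for a genuine, non-point circle) `E[Y] = Q[Y]/A[Y] = ℓ`: the energy of any equilibrium is a
positive integer. -/
theorem stmt10 (a b c d : ℝ) (ℓ : ℕ) (hl : 0 < ℓ) (Y : ℝ → ℝ × ℝ)
    (hY : ∀ u, Y u =
      (a / (ℓ : ℝ)) • ((Real.sin (ℓ * u), -Real.cos (ℓ * u)) : ℝ × ℝ) +
        (b / (ℓ : ℝ)) • ((Real.cos (ℓ * u), Real.sin (ℓ * u)) : ℝ × ℝ) + ((c, d) : ℝ × ℝ)) :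
    (1/2 : ℝ) * (∫ u in (0:ℝ)..(2*π), nsq (deriv Y u)) = π * (a ^ 2 + b ^ 2) ∧
      -(1/2 : ℝ) * (∫ u in (0:ℝ)..(2*π), dotp (Y u) (rot2 (deriv Y u))) =
        π * (a ^ 2 + b ^ 2) / (ℓ : ℝ) ∧
      (a ^ 2 + b ^ 2 ≠ 0 →
        ((1/2 : ℝ) * ∫ u in (0:ℝ)..(2*π), nsq (deriv Y u)) /
            (-(1/2 : ℝ) * ∫ u in (0:ℝ)..(2*π), dotp (Y u) (rot2 (deriv Y u))) = (ℓ : ℝ)) := by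
  obtain rfl : Y = coveredCircle a b c d ℓ := funext hY
  have hQ := integral_nsq_deriv_coveredCircle a b c d (Nat.cast_ne_zero.mpr hl.ne')
  have hA := integral_dotp_coveredCircle_rot2_deriv a b c d hl.ne'
  refine ⟨by rw [hQ]; ring, by rw [hA]; ring, fun hab => ?_⟩
  rw [hQ, hA]
  field_simp [pi_ne_zero]
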